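/- Let $0<\gamma<n$, $1\le p<n/\gamma$ and $1/q=1/p-\gamma/n$. Then for every nonnegative measurable function $w$ and every nonnegative $f\in L^p(\mathbb{R}^n)$, the pointwise estimate $M_\gamma(fw^{-1})(x)\le M(f^p w^{-q})(x)^{1/q}\left(\int_{\mathbb{R}^n}f(y)^p\,dy\right)^{\gamma/n}$ holds for every $x\in\mathbb{R}^n$. -/

import Mathlib

open MeasureTheory ENNReal NNReal Filter Topology

noncomputable section

variable {n : ℕ}

/-- The axis-parallel cube with corner `a` and side length `h`. -/
def Cube (a : EuclideanSpace ℝ (Fin n)) (h : ℝ) : Set (EuclideanSpace ℝ (Fin n)) :=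
  {y | ∀ i, a i ≤ y i ∧ y i ≤ a i + h}

/-- The fractional maximal operator `M_γ`; for `γ = 0` this is the Hardy–Littlewood
maximal operator `M`. -/
def fracMaximal (γ : ℝ) (f : EuclideanSpace ℝ (Fin n) → ℝ≥0∞)
    (x : EuclideanSpace ℝ (Fin n)) : ℝ≥0∞ :=
  ⨆ (a : EuclideanSpace ℝ (Fin n)) (h : ℝ) (_ : 0 < h) (_ : x ∈ Cube a h),
    volume (Cube a h) ^ (γ / n - 1) * ∫⁻ y in Cube a h, f y

/-- The fractional integral operator `I_γ`. -/
def fracIntegral (γ : ℝ) (f : EuclideanSpace ℝ (Fin n) → ℝ≥0∞)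
    (x : EuclideanSpace ℝ (Fin n)) : ℝ≥0∞ :=
  ∫⁻ y, f y * (‖x - y‖₊ : ℝ≥0∞) ^ (γ - (n : ℝ))

/-- A weight: measurable, positive and finite a.e., locally integrable. -/
def IsWeight (w : EuclideanSpace ℝ (Fin n) → ℝ≥0∞) : Prop :=
  Measurable w ∧ (∀ᵐ x ∂(volume : Measure (EuclideanSpace ℝ (Fin n))), 0 < w x ∧ w x < ∞) ∧
    ∀ (a : EuclideanSpace ℝ (Fin n)) (h : ℝ), 0 < h → ∫⁻ y in Cube a h, w y < ∞

/-- The Muckenhoupt `A₁` condition with constant `C`. -/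
def IsA1 (w : EuclideanSpace ℝ (Fin n) → ℝ≥0∞) (C : ℝ≥0) : Prop :=
  ∀ (a : EuclideanSpace ℝ (Fin n)) (h : ℝ), 0 < h →
    ∫⁻ y in Cube a h, w y ≤ C * volume (Cube a h) * essInf w (volume.restrict (Cube a h))

/-- The reverse Hölder `RH_∞` condition with constant `C`. -/
def IsRHinf (w : EuclideanSpace ℝ (Fin n) → ℝ≥0∞) (C : ℝ≥0) : Prop :=
  ∀ (a : EuclideanSpace ℝ (Fin n)) (h : ℝ), 0 < h →
    essSup w (volume.restrict (Cube a h)) * volume (Cube a h) ≤ C * ∫⁻ y in Cube a h, w y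

/-- The Muckenhoupt `A_p` condition (`1 < p`) with constant `C`. -/
def IsAp (p : ℝ) (w : EuclideanSpace ℝ (Fin n) → ℝ≥0∞) (C : ℝ≥0) : Prop :=
  ∀ (a : EuclideanSpace ℝ (Fin n)) (h : ℝ), 0 < h →
    (∫⁻ y in Cube a h, w y) * (∫⁻ y in Cube a h, w y ^ (-(1 / (p - 1)))) ^ (p - 1)
      ≤ C * volume (Cube a h) ^ p

/-- `A_∞ = ⋃_p A_p`. -/
def IsAinf (w : EuclideanSpace ℝ (Fin n) → ℝ≥0∞) : Prop :=
  ∃ (p : ℝ) (C : ℝ≥0), 1 < p ∧ IsAp p w C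

/-- The `A_r(u)` condition: Muckenhoupt `A_r` with respect to the measure `u dx`. -/
def IsApWrt (u : EuclideanSpace ℝ (Fin n) → ℝ≥0∞) (r : ℝ)
    (v : EuclideanSpace ℝ (Fin n) → ℝ≥0∞) (C : ℝ≥0) : Prop :=
  ∀ (a : EuclideanSpace ℝ (Fin n)) (h : ℝ), 0 < h →
    (∫⁻ y in Cube a h, v y * u y) *
      (∫⁻ y in Cube a h, v y ^ (-(1 / (r - 1))) * u y) ^ (r - 1)
      ≤ C * (∫⁻ y in Cube a h, u y) ^ r

/-- `A_∞(u) = ⋃_r A_r(u)`. -/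
def IsAinfWrt (u v : EuclideanSpace ℝ (Fin n) → ℝ≥0∞) : Prop :=
  ∃ (r : ℝ) (C : ℝ≥0), 1 < r ∧ IsApWrt u r v C

/-- The weak `L^{q,∞}(w)` quasinorm `sup_t t · w({|g|>t})^{1/q}`. -/
def weakNorm (q : ℝ) (w g : EuclideanSpace ℝ (Fin n) → ℝ≥0∞) : ℝ≥0∞ :=
  ⨆ t : ℝ≥0, (t : ℝ≥0∞) * (∫⁻ x in {x | (t : ℝ≥0∞) < g x}, w x) ^ (1 / q)

/-!
On a cube `Q`, write `f w⁻¹ = (f^p w^{-q})^{1/q} · (f^p)^{γ/n} · 1` and apply Hölder's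
inequality with the three exponents `1/q`, `γ/n = 1/p - 1/q` and `1 - 1/p`, which sum to `1`.
The resulting power `|Q|^{1 - 1/p}` combines with the normalisation `|Q|^{γ/n - 1}` to
`|Q|^{-1/q}`, turning the first factor into an average of `f^p w^{-q}`; the second factor is
at most `(∫ f^p)^{γ/n}`.
-/

theorem lintegral_rpow_mul_rpow_le {α : Type*} [MeasurableSpace α] (μ : Measure α)
    {F G : α → ℝ≥0∞} (hF : AEMeasurable F μ) (hG : AEMeasurable G μ) {a b : ℝ}
    (ha : 0 ≤ a) (hb : 0 ≤ b) (hab : a + b ≤ 1) :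
    ∫⁻ y, F y ^ a * G y ^ b ∂μ ≤
      (∫⁻ y, F y ∂μ) ^ a * (∫⁻ y, G y ∂μ) ^ b * μ Set.univ ^ (1 - a - b) := by
  have h := ENNReal.lintegral_prod_norm_pow_le (μ := μ) Finset.univ
    (f := ![F, G, fun _ => 1]) (p := ![a, b, 1 - a - b])
    (by intro i _; fin_cases i <;> simp [hF, hG])
    (by simp [Fin.sum_univ_three])
    (by intro i _; fin_cases i <;> simp [ha, hb]; linarith)
  simpa [Fin.prod_univ_three, mul_assoc] using h

theorem mul_inv_eq_rpow_mul_rpow {p q : ℝ} (hp0 : 0 < p) (hpq : p ≤ q) (a b : ℝ≥0∞) :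
    a * b⁻¹ = (a ^ p * b ^ (-q)) ^ (1 / q) * (a ^ p) ^ (1 / p - 1 / q) := by
  have hq0 : 0 < q := hp0.trans_le hpq
  have hqp : 1 / q ≤ 1 / p := one_div_le_one_div_of_le hp0 hpq
  have hb : -q * (1 / q) = -1 := by field_simp [hq0.ne']
  have ha : p * (1 / q) + p * (1 / p - 1 / q) = 1 := by field_simp; ring
  rw [ENNReal.mul_rpow_of_nonneg _ _ (by positivity), ← ENNReal.rpow_mul, ← ENNReal.rpow_mul,
    ← ENNReal.rpow_mul, hb, ENNReal.rpow_neg_one, mul_right_comm,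
    ← ENNReal.rpow_add_of_nonneg _ _ (by positivity) (mul_nonneg hp0.le (sub_nonneg.2 hqp)), ha,
    ENNReal.rpow_one]

theorem lintegral_mul_inv_le {α : Type*} [MeasurableSpace α] (μ : Measure α) {p q : ℝ}
    (hp : 1 ≤ p) (hpq : p ≤ q) {f w : α → ℝ≥0∞} (hf : AEMeasurable f μ)
    (hw : AEMeasurable w μ) :
    ∫⁻ y, f y * (w y)⁻¹ ∂μ ≤
      (∫⁻ y, f y ^ p * w y ^ (-q) ∂μ) ^ (1 / q) * (∫⁻ y, f y ^ p ∂μ) ^ (1 / p - 1 / q) *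
        μ Set.univ ^ (1 - 1 / p) := by
  have hp0 : 0 < p := zero_lt_one.trans_le hp
  have hq0 : 0 < q := hp0.trans_le hpq
  have hqp : 1 / q ≤ 1 / p := one_div_le_one_div_of_le hp0 hpq
  have hp1 : 1 / p ≤ 1 := (div_le_one hp0).2 hp
  calc ∫⁻ y, f y * (w y)⁻¹ ∂μ
      = ∫⁻ y, (f y ^ p * w y ^ (-q)) ^ (1 / q) * (f y ^ p) ^ (1 / p - 1 / q) ∂μ := by
        simp_rw [← mul_inv_eq_rpow_mul_rpow hp0 hpq]
    _ ≤ _ := by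
        refine (lintegral_rpow_mul_rpow_le μ (F := fun y => f y ^ p * w y ^ (-q))
          ((hf.pow_const p).mul (hw.pow_const (-q))) (hf.pow_const p) (by positivity)
          (sub_nonneg.2 hqp) (by linarith)).trans_eq ?_
        ring_nf

theorem rpow_mul_setLIntegral_mul_inv_le {α : Type*} [MeasurableSpace α] (μ : Measure α)
    {p q : ℝ} (hp : 1 ≤ p) (hpq : p ≤ q) {f w : α → ℝ≥0∞} (hf : AEMeasurable f μ)
    (hw : AEMeasurable w μ) {S : Set α} (hS0 : μ S ≠ 0) (hS : μ S ≠ ∞) :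
    μ S ^ (1 / p - 1 / q - 1) * ∫⁻ y in S, f y * (w y)⁻¹ ∂μ ≤
      ((μ S)⁻¹ * ∫⁻ y in S, f y ^ p * w y ^ (-q) ∂μ) ^ (1 / q) *
        (∫⁻ y in S, f y ^ p ∂μ) ^ (1 / p - 1 / q) := by
  have hq0 : 0 < q := (zero_lt_one.trans_le hp).trans_le hpq
  have hμ : μ S ^ (1 / p - 1 / q - 1) * μ S ^ (1 - 1 / p) = (μ S)⁻¹ ^ (1 / q) := by
    rw [← ENNReal.rpow_add _ _ hS0 hS, ENNReal.inv_rpow, ← ENNReal.rpow_neg]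
    ring_nf
  calc μ S ^ (1 / p - 1 / q - 1) * ∫⁻ y in S, f y * (w y)⁻¹ ∂μ
      ≤ μ S ^ (1 / p - 1 / q - 1) * ((∫⁻ y in S, f y ^ p * w y ^ (-q) ∂μ) ^ (1 / q) *
          (∫⁻ y in S, f y ^ p ∂μ) ^ (1 / p - 1 / q) * μ S ^ (1 - 1 / p)) := by
        gcongr
        simpa only [Measure.restrict_apply_univ] using
          lintegral_mul_inv_le (μ.restrict S) hp hpq hf.restrict hw.restrict
    _ = _ := by
        rw [ENNReal.mul_rpow_of_nonneg _ _ (by positivity), ← hμ]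
        ring

lemma cube_eq (a : EuclideanSpace ℝ (Fin n)) (h : ℝ) :
    Cube a h = (MeasurableEquiv.toLp 2 (Fin n → ℝ)).symm ⁻¹'
      (Set.univ.pi fun i => Set.Icc (a i) (a i + h)) := by
  ext y
  simp [Cube, Set.mem_Icc, MeasurableEquiv.coe_toLp_symm, Pi.le_def, forall_and]

lemma volume_cube (a : EuclideanSpace ℝ (Fin n)) (h : ℝ) :
    volume (Cube a h) = ENNReal.ofReal h ^ n := by
  rw [cube_eq, (EuclideanSpace.volume_preserving_symm_measurableEquiv_toLp (Fin n)).measure_preimage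
    (MeasurableSet.univ_pi fun i => measurableSet_Icc).nullMeasurableSet,
    volume_pi_pi]
  simp [Real.volume_Icc]

lemma le_fracMaximal (γ : ℝ) (g : EuclideanSpace ℝ (Fin n) → ℝ≥0∞)
    {x a : EuclideanSpace ℝ (Fin n)} {h : ℝ} (hh : 0 < h) (hx : x ∈ Cube a h) :
    volume (Cube a h) ^ (γ / n - 1) * ∫⁻ y in Cube a h, g y ≤ fracMaximal γ g x :=
  le_iSup_of_le a <| le_iSup_of_le h <| le_iSup_of_le hh <| le_iSup_of_le hx le_rfl

theorem stmt1_general (n : ℕ) (hn : 0 < n) (γ p q : ℝ)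
    (hγ : 0 < γ) (hp : 1 ≤ p) (hpn : p < n / γ)
    (hq : 1 / q = 1 / p - γ / n)
    (w f : EuclideanSpace ℝ (Fin n) → ℝ≥0∞) (hw : Measurable w) (hf : Measurable f)
    (x : EuclideanSpace ℝ (Fin n)) :
    fracMaximal γ (fun y => f y * (w y)⁻¹) x
      ≤ (fracMaximal 0 (fun y => f y ^ p * w y ^ (-q)) x) ^ (1 / q) *
          (∫⁻ y, f y ^ p) ^ (γ / n) := by
  have hp0 : 0 < p := zero_lt_one.trans_le hp
  have hγn_lt : γ / n < 1 / p := by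
    rw [div_lt_div_iff₀ (Nat.cast_pos.2 hn) hp0]
    linarith [(lt_div_iff₀ hγ).1 hpn]
  have hγn_eq : γ / n = 1 / p - 1 / q := by rw [hq]; ring
  have hq0 : 0 < q := one_div_pos.1 (by linarith)
  have hpq : p ≤ q :=
    (one_div_le_one_div hq0 hp0).1 (by linarith [div_pos hγ (Nat.cast_pos.2 hn)])
  refine iSup_le fun a => iSup_le fun h => iSup_le fun hh => iSup_le fun hx => ?_
  have hvol : volume (Cube a h) = ENNReal.ofReal h ^ n := volume_cube a h
  have hM : (volume (Cube a h))⁻¹ * ∫⁻ y in Cube a h, f y ^ p * w y ^ (-q)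
      ≤ fracMaximal 0 (fun y => f y ^ p * w y ^ (-q)) x := by
    simpa [ENNReal.rpow_neg_one] using le_fracMaximal 0 _ hh hx
  calc volume (Cube a h) ^ (γ / n - 1) * ∫⁻ y in Cube a h, f y * (w y)⁻¹
      ≤ ((volume (Cube a h))⁻¹ * ∫⁻ y in Cube a h, f y ^ p * w y ^ (-q)) ^ (1 / q) *
          (∫⁻ y in Cube a h, f y ^ p) ^ (1 / p - 1 / q) := by
        rw [hγn_eq]
        exact rpow_mul_setLIntegral_mul_inv_le volume hp hpq hf.aemeasurable hw.aemeasurable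
          (by simp [hvol, hh, hn.ne']) (by simp [hvol])
    _ ≤ _ := by
        rw [← hγn_eq]
        exact mul_le_mul' (ENNReal.rpow_le_rpow hM (by positivity))
          (ENNReal.rpow_le_rpow (setLIntegral_le_lintegral _ _) (by positivity))

/-- pointwise bound `M_γ(f w⁻¹)(x) ≤ M(f^p w^{-q})(x)^{1/q} (∫ f^p)^{γ/n}`. -/
theorem stmt1 (n : ℕ) (hn : 0 < n) (γ p q : ℝ)
    (hγ : 0 < γ) (hγn : γ < n) (hp : 1 ≤ p) (hpn : p < n / γ)
    (hq : 1 / q = 1 / p - γ / n)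
    (w f : EuclideanSpace ℝ (Fin n) → ℝ≥0∞) (hw : Measurable w) (hf : Measurable f)
    (hfLp : ∫⁻ y, f y ^ p < ∞) (x : EuclideanSpace ℝ (Fin n)) :
    fracMaximal γ (fun y => f y * (w y)⁻¹) x
      ≤ (fracMaximal 0 (fun y => f y ^ p * w y ^ (-q)) x) ^ (1 / q) *
          (∫⁻ y, f y ^ p) ^ (γ / n) :=
  stmt1_general n hn γ p q hγ hp hpn hq w f hw hf x
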